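/- Let p > 0 with 2/p ∈ ℕ, ω ≥ 0, and φ ∈ [0,2π). Then ∫₀^r τ·𝒥_{0,φ}^{[p]}(τ) dτ = r·𝒥_{1,φ}^{[p]}(r) for all r ≥ 0. -/

import Mathlib

/-!
Both sides are power series in `r`. Writing `τ 𝒥_{0,φ}^{[p]}(τ) = C ∑ c_k τ^{2k+1}`, termwise
integration gives `C ∑ c_k r^{2k+2} / (2k+2)`, and `Γ(s + 1) = s Γ(s)` at `s = 2(k+1)/p` turns
this into the series of `r 𝒥_{1,φ}^{[p]}(r)`. Integration and summation commute by dominated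
convergence once `|c_k| ≤ 2p 16^k / (2k)!`; the only non-trivial input there is the
Beta-function-type bound `Γ(a) Γ(b) ≤ p² (a + b) Γ(a + b)` for `a, b ≥ 1/p`, which follows from
the log-convexity of `Γ`.
-/

/-- The one-variable generalized Bessel function `𝒥_{ω,φ}^{[p]}(r)`, via its series. -/
noncomputable def calJ (p ω φ r : ℝ) : ℝ :=
  ((2 / p) ^ 2 / Real.Gamma (1 / p) ^ 2) *
    ∑' k : ℕ, (p ^ (2 * k) * (-1 : ℝ) ^ k / Real.Gamma ((2 / p) * ((k : ℝ) + 1) + ω)) *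
      (r / p) ^ (2 * (k : ℝ) + ω) *
      ∑ n ∈ Finset.range (k + 1),
        Real.Gamma ((2 * (n : ℝ) + 1) / p) * Real.Gamma ((2 * ((k - n : ℕ) : ℝ) + 1) / p) /
            ((Nat.factorial (2 * n) : ℝ) * (Nat.factorial (2 * (k - n)) : ℝ)) *
          (|Real.cos φ| ^ (4 * (n : ℝ) / p) * |Real.sin φ| ^ (4 * ((k - n : ℕ) : ℝ) / p))

open Real

namespace Real

theorem Gamma_mul_Gamma_le_Gamma_add_sub_one {x y : ℝ} (hx : 1 ≤ x) (hy : 1 ≤ y) :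
    Gamma x * Gamma y ≤ Gamma (x + y - 1) := by
  rcases (show 0 ≤ x + y - 2 by linarith).eq_or_lt with hd | hd
  · obtain rfl : x = 1 := by linarith
    obtain rfl : y = 1 := by linarith
    norm_num
  have hΓx := Gamma_pos_of_pos (show 0 < x by linarith)
  have hΓy := Gamma_pos_of_pos (show 0 < y by linarith)
  -- `x` and `y` are convex combinations of `1` and `x + y - 1` with swapped weights
  have hconv {a b : ℝ} (ha : 0 ≤ a) (hb : 0 ≤ b) (hab : a + b = 1) :=
    convexOn_log_Gamma.2 (Set.mem_Ioi.2 one_pos) (Set.mem_Ioi.2 (show 0 < x + y - 1 by linarith))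
      ha hb hab
  have hlx := hconv (a := (y - 1) / (x + y - 2)) (b := (x - 1) / (x + y - 2))
    (div_nonneg (by linarith) hd.le) (div_nonneg (by linarith) hd.le) (by field_simp; ring)
  have hly := hconv (a := (x - 1) / (x + y - 2)) (b := (y - 1) / (x + y - 2))
    (div_nonneg (by linarith) hd.le) (div_nonneg (by linarith) hd.le) (by field_simp; ring)
  have ex : (y - 1) / (x + y - 2) * 1 + (x - 1) / (x + y - 2) * (x + y - 1) = x := by
    field_simp; ring
  have ey : (x - 1) / (x + y - 2) * 1 + (y - 1) / (x + y - 2) * (x + y - 1) = y := by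
    field_simp; ring
  simp only [Function.comp, smul_eq_mul, ex, ey, Gamma_one, log_one, mul_zero, zero_add]
    at hlx hly
  have hlog : log (Gamma x * Gamma y) ≤ log (Gamma (x + y - 1)) := by
    rw [log_mul hΓx.ne' hΓy.ne']
    have hw : (x - 1) / (x + y - 2) + (y - 1) / (x + y - 2) = 1 := by field_simp; ring
    calc log (Gamma x) + log (Gamma y)
        ≤ ((x - 1) / (x + y - 2) + (y - 1) / (x + y - 2)) * log (Gamma (x + y - 1)) := by
          linarith
      _ = log (Gamma (x + y - 1)) := by rw [hw, one_mul]
  exact (log_le_log_iff (by positivity) (Gamma_pos_of_pos (by linarith))).1 hlog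

theorem Gamma_mul_Gamma_le_of_le {ε x y : ℝ} (hε : 0 < ε) (hx : ε ≤ x) (hy : ε ≤ y) :
    Gamma x * Gamma y ≤ (x + y) / ε ^ 2 * Gamma (x + y) := by
  have hx0 : 0 < x := hε.trans_le hx
  have hy0 : 0 < y := hε.trans_le hy
  have hshift := Gamma_mul_Gamma_le_Gamma_add_sub_one (x := x + 1) (y := y + 1) (by linarith)
    (by linarith)
  rw [Gamma_add_one hx0.ne', Gamma_add_one hy0.ne', show x + 1 + (y + 1) - 1 = x + y + 1 by ring,
    Gamma_add_one (by positivity)] at hshift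
  rw [div_mul_eq_mul_div, le_div_iff₀ (by positivity)]
  have := mul_pos (Gamma_pos_of_pos hx0) (Gamma_pos_of_pos hy0)
  calc Gamma x * Gamma y * ε ^ 2 ≤ Gamma x * Gamma y * (x * y) := by
        gcongr; rw [sq]; exact mul_le_mul hx hy hε.le hx0.le
    _ ≤ _ := by linarith

end Real

theorem one_div_factorial_mul_factorial_le {n k : ℕ} (h : n ≤ k) :
    1 / ((n.factorial : ℝ) * ((k - n).factorial : ℝ)) ≤ 2 ^ k / (k.factorial : ℝ) := by
  rw [div_le_div_iff₀ (by positivity) (by positivity), one_mul]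
  exact_mod_cast calc k.factorial = k.choose n * n.factorial * (k - n).factorial :=
      (Nat.choose_mul_factorial_mul_factorial h).symm
    _ ≤ 2 ^ k * (n.factorial * (k - n).factorial) := by
      rw [mul_assoc]; exact Nat.mul_le_mul_right _ (Nat.choose_le_two_pow k n)

theorem intervalIntegral.hasSum_integral_tsum_mul_pow {a : ℕ → ℝ} {m : ℕ → ℕ} {r : ℝ}
    (h : Summable fun k => |a k| * |r| ^ m k) :
    HasSum (fun k => a k * (r ^ (m k + 1) / (m k + 1))) (∫ τ in 0..r, ∑' k, a k * τ ^ m k) := by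
  have hle {k : ℕ} {τ : ℝ} (hτ : τ ∈ Set.uIoc 0 r) : ‖a k * τ ^ m k‖ ≤ |a k| * |r| ^ m k := by
    have hτr : |τ| ≤ |r| := by
      simpa using Set.abs_sub_left_of_mem_uIcc (Set.uIoc_subset_uIcc hτ)
    rw [norm_mul, norm_pow, Real.norm_eq_abs, Real.norm_eq_abs]
    gcongr
  have := hasSum_integral_of_dominated_convergence (μ := MeasureTheory.volume)
    (F := fun k τ => a k * τ ^ m k) (fun k _ => |a k| * |r| ^ m k)
    (fun k => (by fun_prop : Continuous fun τ : ℝ => a k * τ ^ m k).aestronglyMeasurable)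
    (fun k => MeasureTheory.ae_of_all _ fun τ => hle) (MeasureTheory.ae_of_all _ fun _ _ => h)
    intervalIntegrable_const
    (MeasureTheory.ae_of_all _ fun τ hτ => (h.of_norm_bounded fun k => hle hτ).hasSum)
  simpa [integral_const_mul, integral_pow] using this

noncomputable def calJTerm (p φ : ℝ) (k n : ℕ) : ℝ :=
  Gamma ((2 * (n : ℝ) + 1) / p) * Gamma ((2 * ((k - n : ℕ) : ℝ) + 1) / p) /
      ((Nat.factorial (2 * n) : ℝ) * (Nat.factorial (2 * (k - n)) : ℝ)) *
    (|cos φ| ^ (4 * (n : ℝ) / p) * |sin φ| ^ (4 * ((k - n : ℕ) : ℝ) / p))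

noncomputable def calJInner (p φ : ℝ) (k : ℕ) : ℝ :=
  ∑ n ∈ Finset.range (k + 1), calJTerm p φ k n

noncomputable def calJCoeff (p φ : ℝ) (k : ℕ) : ℝ :=
  (-1) ^ k * calJInner p φ k / Gamma (2 / p * (k + 1))

theorem calJ_eq_tsum (p ω φ r : ℝ) : calJ p ω φ r = (2 / p) ^ 2 / Gamma (1 / p) ^ 2 *
    ∑' k : ℕ, p ^ (2 * k) * (-1) ^ k / Gamma (2 / p * (k + 1) + ω) * (r / p) ^ (2 * (k : ℝ) + ω) *
      calJInner p φ k := rfl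

theorem abs_calJTerm_le {p : ℝ} (hp : 0 < p) (φ : ℝ) {k n : ℕ} (hnk : n ≤ k) :
    |calJTerm p φ k n| ≤
      2 * p * (k + 1) * Gamma (2 / p * (k + 1)) * (4 ^ k / (2 * k).factorial) := by
  have hΓa := Gamma_pos_of_pos (show 0 < (2 * (n : ℝ) + 1) / p by positivity)
  have hΓb := Gamma_pos_of_pos (show 0 < (2 * ((k - n : ℕ) : ℝ) + 1) / p by positivity)
  have hcos := rpow_le_one (abs_nonneg (cos φ)) (abs_cos_le_one φ)
    (show 0 ≤ 4 * (n : ℝ) / p by positivity)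
  have hsin := rpow_le_one (abs_nonneg (sin φ)) (abs_sin_le_one φ)
    (show 0 ≤ 4 * ((k - n : ℕ) : ℝ) / p by positivity)
  have hΓ : Gamma ((2 * (n : ℝ) + 1) / p) * Gamma ((2 * ((k - n : ℕ) : ℝ) + 1) / p)
      ≤ 2 * p * (k + 1) * Gamma (2 / p * (k + 1)) := by
    have hsum : (2 * (n : ℝ) + 1) / p + (2 * ((k - n : ℕ) : ℝ) + 1) / p = 2 / p * (k + 1) := by
      rw [Nat.cast_sub hnk]; field_simp; ring
    have hε (m : ℕ) : 1 / p ≤ (2 * (m : ℝ) + 1) / p := by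
      gcongr; linarith [m.cast_nonneg (α := ℝ)]
    have := Gamma_mul_Gamma_le_of_le (one_div_pos.2 hp) (hε n) (hε (k - n))
    rw [hsum] at this
    convert this using 2
    field_simp
  have hfac : 1 / (((2 * n).factorial : ℝ) * ((2 * (k - n)).factorial : ℝ))
      ≤ 4 ^ k / (2 * k).factorial := by
    rw [show 2 * (k - n) = 2 * k - 2 * n by omega,
      show (4 : ℝ) ^ k = 2 ^ (2 * k) by rw [pow_mul]; norm_num]
    exact one_div_factorial_mul_factorial_le (by omega)
  rw [calJTerm, abs_of_nonneg (by positivity)]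
  calc _ ≤ Gamma ((2 * (n : ℝ) + 1) / p) * Gamma ((2 * ((k - n : ℕ) : ℝ) + 1) / p) *
        (1 / (((2 * n).factorial : ℝ) * ((2 * (k - n)).factorial : ℝ))) * 1 := by
        rw [mul_one_div]
        gcongr
        exact mul_le_one₀ hcos (by positivity) hsin
    _ ≤ _ := by rw [mul_one]; gcongr

theorem abs_calJInner_le {p : ℝ} (hp : 0 < p) (φ : ℝ) (k : ℕ) :
    |calJInner p φ k| ≤ 2 * p * Gamma (2 / p * (k + 1)) * 16 ^ k / (2 * k).factorial := by
  have hk : ((k : ℝ) + 1) ^ 2 ≤ 4 ^ k := by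
    rw [show (4 : ℝ) ^ k = (2 ^ k) ^ 2 by rw [← pow_mul, mul_comm, pow_mul]; norm_num]
    gcongr
    exact_mod_cast Nat.lt_two_pow_self
  have hΓ := Gamma_pos_of_pos (show 0 < 2 / p * (k + 1) by positivity)
  calc |calJInner p φ k| ≤ ∑ n ∈ Finset.range (k + 1),
        2 * p * (k + 1) * Gamma (2 / p * (k + 1)) * (4 ^ k / (2 * k).factorial) :=
        (Finset.abs_sum_le_sum_abs _ _).trans <| Finset.sum_le_sum fun n hn =>
          abs_calJTerm_le hp φ (Nat.lt_succ_iff.mp (Finset.mem_range.mp hn))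
    _ = 2 * p * Gamma (2 / p * (k + 1)) * ((k + 1) ^ 2 * 4 ^ k) / (2 * k).factorial := by
        rw [Finset.sum_const, Finset.card_range, nsmul_eq_mul]; push_cast; ring
    _ ≤ 2 * p * Gamma (2 / p * (k + 1)) * (4 ^ k * 4 ^ k) / (2 * k).factorial := by gcongr
    _ = _ := by rw [← mul_pow]; norm_num

theorem abs_calJCoeff_le {p : ℝ} (hp : 0 < p) (φ : ℝ) (k : ℕ) :
    |calJCoeff p φ k| ≤ 2 * p * 16 ^ k / (2 * k).factorial := by
  have hΓ := Gamma_pos_of_pos (show 0 < 2 / p * (k + 1) by positivity)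
  rw [calJCoeff, abs_div, abs_mul, abs_pow, abs_neg, abs_one, one_pow, one_mul, abs_of_pos hΓ,
    div_le_iff₀ hΓ]
  calc |calJInner p φ k| ≤ 2 * p * Gamma (2 / p * (k + 1)) * 16 ^ k / (2 * k).factorial :=
        abs_calJInner_le hp φ k
    _ = _ := by ring

theorem summable_abs_calJCoeff_mul_pow {p : ℝ} (hp : 0 < p) (φ r : ℝ) :
    Summable fun k => |calJCoeff p φ k| * |r| ^ (2 * k + 1) := by
  refine .of_nonneg_of_le (fun k => by positivity) (fun k => ?_)
    ((hasSum_cosh (4 * |r|)).summable.mul_left (2 * p * |r|))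
  calc |calJCoeff p φ k| * |r| ^ (2 * k + 1)
      ≤ 2 * p * 16 ^ k / (2 * k).factorial * |r| ^ (2 * k + 1) := by
        gcongr; exact abs_calJCoeff_le hp φ k
    _ = _ := by rw [mul_pow, pow_mul (4 : ℝ)]; ring

theorem mul_calJ_zero {p : ℝ} (hp : p ≠ 0) (φ τ : ℝ) :
    τ * calJ p 0 φ τ =
      (2 / p) ^ 2 / Gamma (1 / p) ^ 2 * ∑' k, calJCoeff p φ k * τ ^ (2 * k + 1) := by
  rw [calJ_eq_tsum, mul_left_comm, ← tsum_mul_left]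
  congr 1
  refine tsum_congr fun k => ?_
  rw [add_zero, add_zero, show 2 * (k : ℝ) = ((2 * k : ℕ) : ℝ) by push_cast; ring, rpow_natCast,
    div_pow, calJCoeff]
  field_simp
  ring

theorem mul_calJ_one {p : ℝ} (hp : 0 < p) (φ r : ℝ) :
    r * calJ p 1 φ r = (2 / p) ^ 2 / Gamma (1 / p) ^ 2 *
      ∑' k, calJCoeff p φ k * (r ^ (2 * k + 1 + 1) / ((2 * k + 1 : ℕ) + 1)) := by
  rw [calJ_eq_tsum, mul_left_comm, ← tsum_mul_left]
  congr 1
  refine tsum_congr fun k => ?_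
  have hs : 2 / p * ((k : ℝ) + 1) ≠ 0 := by positivity
  rw [Gamma_add_one hs, show 2 * (k : ℝ) + 1 = ((2 * k + 1 : ℕ) : ℝ) by push_cast; ring,
    rpow_natCast, div_pow, calJCoeff]
  push_cast
  field_simp
  ring

theorem calJ_integral_zero_one_general (p : ℝ) (hp : 0 < p)
    (φ : ℝ) (r : ℝ) :
    (∫ τ in (0 : ℝ)..r, τ * calJ p 0 φ τ) = r * calJ p 1 φ r := by
  simp_rw [mul_calJ_zero hp.ne', intervalIntegral.integral_const_mul, mul_calJ_one hp]
  congr 1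
  exact ((intervalIntegral.hasSum_integral_tsum_mul_pow
    (summable_abs_calJCoeff_mul_pow hp φ r)).tsum_eq).symm

theorem calJ_integral_zero_one (p : ℝ) (hp : 0 < p) (hq : ∃ q : ℕ, (q : ℝ) = 2 / p)
    (ω φ : ℝ) (hω : 0 ≤ ω) (hφ : φ ∈ Set.Ico 0 (2 * Real.pi)) (r : ℝ) (hr : 0 ≤ r) :
    (∫ τ in (0 : ℝ)..r, τ * calJ p 0 φ τ) = r * calJ p 1 φ r :=
  calJ_integral_zero_one_general p hp φ r
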